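/- arXiv:1909.05485 — 3 statements merged into one kernel-verified Lean document; each statement's English description precedes it below -/
import Mathlib

section
/- Let X ∈ ℝ^{n×p} satisfy XᵀX = I_p, let η ∈ ℝ^{n×p} satisfy Xᵀη + ηᵀX = 0, let S ∈ ℝ^{p×p} be symmetric positive definite with S·S = I_p + ηᵀη, and set Y := (X + η)·S⁻¹. Then S satisfies the Lyapunov equation (XᵀY)·S + S·(YᵀX) = 2·I_p. -/
/-! Since `S` is symmetric, `S (S⁻¹)ᵀ = I`, so both factors `S` cancel and the left-hand side
collapses to `Xᵀ(X + η) + (X + η)ᵀX`, which is `2 I` by `XᵀX = I` and tangency of `η`. -/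

open Matrix

namespace Matrix

theorem IsSymm.mul_transpose_mul_nonsing_inv {m n R : Type*} [Fintype m] [DecidableEq m]
    [CommRing R] {S : Matrix m m R} (hS : S.IsSymm) (hdet : IsUnit S.det) (B : Matrix n m R) :
    S * (B * S⁻¹)ᵀ = Bᵀ := by
  rw [transpose_mul, transpose_nonsing_inv, hS.eq, mul_nonsing_inv_cancel_left _ _ hdet]

theorem IsSymm.transpose_mul_mul_nonsing_inv_mul_add {m n R : Type*} [Fintype m]
    [DecidableEq m] [Fintype n] [CommRing R] {S : Matrix m m R} (hS : S.IsSymm)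
    (hdet : IsUnit S.det) (A B : Matrix n m R) :
    Aᵀ * (B * S⁻¹) * S + S * ((B * S⁻¹)ᵀ * A) = Aᵀ * B + Bᵀ * A := by
  rw [Matrix.mul_assoc Aᵀ, nonsing_inv_mul_cancel_right _ _ hdet, ← Matrix.mul_assoc,
    hS.mul_transpose_mul_nonsing_inv hdet]

theorem transpose_mul_add_add_transpose_mul_of_tangent {m n R : Type*} [DecidableEq m]
    [Fintype n] [CommRing R] {X η : Matrix n m R} (hX : Xᵀ * X = 1)
    (hη : Xᵀ * η + ηᵀ * X = 0) :
    Xᵀ * (X + η) + (X + η)ᵀ * X = (2 : R) • 1 := by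
  rw [Matrix.mul_add, transpose_add, Matrix.add_mul, hX, add_add_add_comm, hη, add_zero,
    two_smul]

end Matrix

theorem polar_retraction_lyapunov_general
    {n p : ℕ} (X η : Matrix (Fin n) (Fin p) ℝ) (S : Matrix (Fin p) (Fin p) ℝ)
    (hX : Xᵀ * X = 1) (hη : Xᵀ * η + ηᵀ * X = 0)
    (hS : S.PosDef) :
    (Xᵀ * ((X + η) * S⁻¹)) * S + S * (((X + η) * S⁻¹)ᵀ * X) =
      (2 : ℝ) • (1 : Matrix (Fin p) (Fin p) ℝ) := by
  have hdet : IsUnit S.det := (isUnit_iff_isUnit_det S).mp hS.isUnit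
  have hsymm : S.IsSymm := isHermitian_iff_isSymm.mp hS.isHermitian
  rw [hsymm.transpose_mul_mul_nonsing_inv_mul_add hdet]
  exact transpose_mul_add_add_transpose_mul_of_tangent hX hη

/-- eq. (lyap) of the paper.
If `XᵀX = I_p`, `η` is tangent (`Xᵀη + ηᵀX = 0`), `S` is symmetric positive
definite with `S·S = I_p + ηᵀη`, and `Y = (X+η)S⁻¹`, then `S` solves the
Lyapunov equation `(XᵀY)S + S(YᵀX) = 2 I_p`. -/
theorem polar_retraction_lyapunov
    {n p : ℕ} (X η : Matrix (Fin n) (Fin p) ℝ) (S : Matrix (Fin p) (Fin p) ℝ)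
    (hX : Xᵀ * X = 1) (hη : Xᵀ * η + ηᵀ * X = 0)
    (hS : S.PosDef) (hSS : S * S = 1 + ηᵀ * η) :
    (Xᵀ * ((X + η) * S⁻¹)) * S + S * (((X + η) * S⁻¹)ᵀ * X) =
      (2 : ℝ) • (1 : Matrix (Fin p) (Fin p) ℝ) :=
  polar_retraction_lyapunov_general X η S hX hη hS
end

section
/- Let n, p be positive integers with p ≤ n, and equip ℝ^{n×p} with the Frobenius inner product ⟪U, V⟫ := trace(Uᵀ V). Let f : ℝ^{n×p} → ℝ be differentiable with gradient map Gf : ℝ^{n×p} → ℝ^{n×p} (i.e., for every X, the Fréchet derivative of f at X is H ↦ ⟪Gf(X), H⟫) such that Gf is continuous; let g : ℝ^{n×p} → ℝ be continuous and convex; let μ > 0 and 0 < κ ≤ κ̃. For X with XᵀX = I_p, write sym(M) := (M + Mᵀ)/2 and P_X(ξ) := ξ − X·sym(Xᵀξ). Suppose (z_i), (η_i) are sequences in ℝ^{n×p} and (W_i) a sequence of self-adjoint linear maps on ℝ^{n×p} such that for every i: (a) z_iᵀ z_i = I_p and z_iᵀ η_i + η_iᵀ z_i = 0; (b) κ‖ξ‖²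 ≤ ⟪ξ, W_i ξ⟫ ≤ κ̃‖ξ‖² for all ξ; (c) there exists v_i ∈ ∂g(z_i + η_i) with P_{z_i}(Gf(z_i) + (1/μ)·W_i η_i + v_i) = 0. If z_i → z₊ and η_i → 0, then there exists v ∈ ∂g(z₊) such that P_{z₊}(Gf(z₊) + v) = 0; that is, z₊ is a stationary point of F = f + g on the Stiefel manifold. -/
open Matrix Filter Topology

attribute [local instance] Matrix.frobeniusNormedAddCommGroup Matrix.frobeniusNormedSpace

/-- `sym(M) = (M + Mᵀ)/2`. -/
noncomputable def symPart {p : ℕ} (M : Matrix (Fin p) (Fin p) ℝ) :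
    Matrix (Fin p) (Fin p) ℝ :=
  (1 / 2 : ℝ) • (M + Mᵀ)

/-- The projection `P_X(ξ) = ξ - X · sym(Xᵀ ξ)` onto the tangent space of the
Stiefel manifold at `X` (w.r.t. the Frobenius inner product `⟪U, V⟫ = trace(Uᵀ V)`). -/
noncomputable def stiefelProj {n p : ℕ} (X ξ : Matrix (Fin n) (Fin p) ℝ) :
    Matrix (Fin n) (Fin p) ℝ :=
  ξ - X * symPart (Xᵀ * ξ)


lemma aux_norm_sq {n p : ℕ} (A : Matrix (Fin n) (Fin p) ℝ) :
    (Aᵀ * A).trace = ‖A‖ ^ 2 := by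
  have h : ‖A‖ ^ 2 = ∑ i, ∑ j, (A i j) ^ 2 := by
    rw [Matrix.frobenius_norm_def, ← Real.rpow_natCast _ 2, ← Real.rpow_mul (by positivity)]
    norm_num
  rw [h]
  simp only [Matrix.trace, Matrix.diag, Matrix.mul_apply, Matrix.transpose_apply, sq]
  rw [Finset.sum_comm]

lemma aux_tr_comm {n p : ℕ} (a b : Matrix (Fin n) (Fin p) ℝ) :
    (aᵀ * b).trace = (bᵀ * a).trace := by
  rw [← Matrix.trace_transpose (aᵀ * b), Matrix.transpose_mul, Matrix.transpose_transpose]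

lemma aux_tr_abs {n p : ℕ} (a b : Matrix (Fin n) (Fin p) ℝ) :
    |(aᵀ * b).trace| ≤ ‖a‖ * ‖b‖ := by
  have hexp : ∀ t : ℝ, ((a + t • b)ᵀ * (a + t • b)).trace =
      (bᵀ * b).trace * t ^ 2 + 2 * (aᵀ * b).trace * t + (aᵀ * a).trace := by
    intro t
    simp only [Matrix.transpose_add, Matrix.transpose_smul, Matrix.add_mul, Matrix.mul_add,
      Matrix.smul_mul, Matrix.mul_smul, Matrix.trace_add, Matrix.trace_smul, smul_eq_mul]
    rw [aux_tr_comm b a]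
    ring
  have hd := discrim_le_zero (a := (bᵀ * b).trace) (b := 2 * (aᵀ * b).trace) (c := (aᵀ * a).trace)
    (fun t => by
      have h : (0:ℝ) ≤ ((a + t • b)ᵀ * (a + t • b)).trace := by rw [aux_norm_sq]; positivity
      rw [hexp t] at h; nlinarith [h])
  rw [discrim] at hd
  have hsq : (aᵀ * b).trace ^ 2 ≤ (‖a‖ * ‖b‖) ^ 2 := by
    rw [aux_norm_sq, aux_norm_sq] at hd
    nlinarith [hd]
  have hab : (0:ℝ) ≤ ‖a‖ * ‖b‖ := by positivity
  rw [abs_le]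
  constructor <;> nlinarith [hsq, hab]

lemma aux_tendsto_transpose {N P : ℕ} {A : ℕ → Matrix (Fin N) (Fin P) ℝ}
    {L : Matrix (Fin N) (Fin P) ℝ} (hA : Tendsto A atTop (𝓝 L)) :
    Tendsto (fun k => (A k)ᵀ) atTop (𝓝 Lᵀ) := by
  replace hA := tendsto_iff_norm_sub_tendsto_zero.mp hA
  refine tendsto_iff_norm_sub_tendsto_zero.mpr ?_
  have : ∀ k, ‖(A k)ᵀ - Lᵀ‖ = ‖A k - L‖ := by
    intro k
    rw [← Matrix.transpose_sub, Matrix.frobenius_norm_transpose]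
  simpa [this] using hA

lemma aux_tendsto_mul {N P Q : ℕ} {A : ℕ → Matrix (Fin N) (Fin P) ℝ}
    {B : ℕ → Matrix (Fin P) (Fin Q) ℝ} {LA : Matrix (Fin N) (Fin P) ℝ}
    {LB : Matrix (Fin P) (Fin Q) ℝ}
    (hA : Tendsto A atTop (𝓝 LA)) (hB : Tendsto B atTop (𝓝 LB)) :
    Tendsto (fun k => A k * B k) atTop (𝓝 (LA * LB)) := by
  refine tendsto_iff_norm_sub_tendsto_zero.mpr ?_
  apply squeeze_zero_norm (a := fun k => ‖A k - LA‖ * ‖B k‖ + ‖LA‖ * ‖B k - LB‖)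
  · intro k
    have heq : A k * B k - LA * LB = (A k - LA) * B k + LA * (B k - LB) := by
      simp only [Matrix.sub_mul, Matrix.mul_sub]
      abel
    rw [norm_norm, heq]
    calc ‖(A k - LA) * B k + LA * (B k - LB)‖
        ≤ ‖(A k - LA) * B k‖ + ‖LA * (B k - LB)‖ := norm_add_le _ _
      _ ≤ ‖A k - LA‖ * ‖B k‖ + ‖LA‖ * ‖B k - LB‖ := by
          gcongr <;> exact Matrix.frobenius_norm_mul _ _
  · have h1 : Tendsto (fun k => ‖A k - LA‖) atTop (𝓝 0) :=
      tendsto_iff_norm_sub_tendsto_zero.mp hA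
    have h2 : Tendsto (fun k => ‖B k - LB‖) atTop (𝓝 0) :=
      tendsto_iff_norm_sub_tendsto_zero.mp hB
    have h3 : Tendsto (fun k => ‖B k‖) atTop (𝓝 ‖LB‖) := hB.norm
    have := (h1.mul h3).add (h2.const_mul ‖LA‖)
    simpa using this

lemma aux_W_bound {n p : ℕ} {κ' : ℝ} (hκ' : 0 ≤ κ')
    (W : Matrix (Fin n) (Fin p) ℝ →ₗ[ℝ] Matrix (Fin n) (Fin p) ℝ)
    (hsa : ∀ a b : Matrix (Fin n) (Fin p) ℝ, ((W a)ᵀ * b).trace = (aᵀ * W b).trace)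
    (hpos : ∀ ξ : Matrix (Fin n) (Fin p) ℝ, 0 ≤ (ξᵀ * W ξ).trace)
    (hub : ∀ ξ : Matrix (Fin n) (Fin p) ℝ, (ξᵀ * W ξ).trace ≤ κ' * (ξᵀ * ξ).trace)
    (ξ : Matrix (Fin n) (Fin p) ℝ) : ‖W ξ‖ ≤ κ' * ‖ξ‖ := by
  set Q : Matrix (Fin n) (Fin p) ℝ → Matrix (Fin n) (Fin p) ℝ → ℝ :=
    fun a b => (aᵀ * W b).trace with hQ
  have hsymm : ∀ a b, Q a b = Q b a := by
    intro a b
    simp only [hQ]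
    rw [aux_tr_comm, hsa]
  have hexp : ∀ (a b : Matrix (Fin n) (Fin p) ℝ) (t : ℝ),
      Q (a + t • b) (a + t • b) = Q b b * t ^ 2 + 2 * Q a b * t + Q a a := by
    intro a b t
    simp only [hQ, map_add, LinearMap.map_smul, Matrix.transpose_add, Matrix.transpose_smul,
      Matrix.add_mul, Matrix.mul_add, Matrix.smul_mul, Matrix.mul_smul,
      Matrix.trace_add, Matrix.trace_smul, smul_eq_mul]
    have hba : (bᵀ * W a).trace = (aᵀ * W b).trace := by
      rw [aux_tr_comm b (W a), hsa]
    rw [hba]; ring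
  have hcs : ∀ a b, Q a b ^ 2 ≤ Q a a * Q b b := by
    intro a b
    have hd := discrim_le_zero (a := Q b b) (b := 2 * Q a b) (c := Q a a)
      (fun t => by
        have h : (0:ℝ) ≤ Q (a + t • b) (a + t • b) := hpos (a + t • b)
        rw [hexp a b t] at h; nlinarith [h])
    rw [discrim] at hd
    nlinarith [hd]
  -- apply with a = W ξ, b = ξ
  have h1 : Q (W ξ) ξ = ‖W ξ‖ ^ 2 := by
    simp only [hQ]; rw [← aux_norm_sq]
  have h2 : Q (W ξ) (W ξ) ≤ κ' * ‖W ξ‖ ^ 2 := by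
    simpa [hQ, aux_norm_sq] using hub (W ξ)
  have h3 : Q ξ ξ ≤ κ' * ‖ξ‖ ^ 2 := by simpa [hQ, aux_norm_sq] using hub ξ
  have hcs' := hcs (W ξ) ξ
  have hWpos := hpos (W ξ)
  have hWpos' : 0 ≤ Q (W ξ) (W ξ) := by
    have := hpos (W ξ); simpa [hQ, hsa] using this
  have hn1 : (0:ℝ) ≤ ‖W ξ‖ := norm_nonneg _
  have hn2 : (0:ℝ) ≤ ‖ξ‖ := norm_nonneg _
  rcases eq_or_lt_of_le hn1 with h0 | h0
  · rw [← h0]; positivity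
  · have key : ‖W ξ‖ ^ 4 ≤ κ' ^ 2 * ‖W ξ‖ ^ 2 * ‖ξ‖ ^ 2 := by
      calc ‖W ξ‖ ^ 4 = (‖W ξ‖ ^ 2) ^ 2 := by ring
        _ = Q (W ξ) ξ ^ 2 := by rw [h1]
        _ ≤ Q (W ξ) (W ξ) * Q ξ ξ := hcs'
        _ ≤ (κ' * ‖W ξ‖ ^ 2) * (κ' * ‖ξ‖ ^ 2) := by
            apply mul_le_mul h2 h3 (hpos ξ) (by positivity)
        _ = κ' ^ 2 * ‖W ξ‖ ^ 2 * ‖ξ‖ ^ 2 := by ring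
    by_contra hlt
    push_neg at hlt
    have h5 : κ' ^ 2 * ‖ξ‖ ^ 2 < ‖W ξ‖ ^ 2 := by
      have := mul_self_lt_mul_self (by positivity : (0:ℝ) ≤ κ' * ‖ξ‖) hlt
      nlinarith [this]
    have h6 := mul_lt_mul_of_pos_left h5 (pow_pos h0 2)
    nlinarith [key, h6]

/-- Theorem 1 of the paper, instantiated on the Stiefel manifold.
Let `f` be differentiable with continuous gradient `Gf` (w.r.t. the Frobenius
inner product), `g` continuous and convex, `μ > 0`, `0 < κ ≤ κ'`. Suppose `z_i`
lie on the Stiefel manifold, `η_i` are tangent at `z_i`, the self-adjoint weights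
`W_i` have Frobenius quadratic forms bounded between `κ‖·‖²` and `κ'‖·‖²`, and
each `η_i` satisfies the first-order optimality condition of the weighted
proximal subproblem: there is `v_i ∈ ∂g(z_i + η_i)` with
`P_{z_i}(Gf(z_i) + (1/μ) W_i η_i + v_i) = 0`. If `z_i → z₊` and `η_i → 0`, then
there exists `v ∈ ∂g(z₊)` with `P_{z₊}(Gf(z₊) + v) = 0`; i.e. `z₊` is a
stationary point of `F = f + g` on the Stiefel manifold. -/
theorem accumulation_point_is_stationary
    {n p : ℕ} (hp : 0 < p) (hpn : p ≤ n)
    (μ κ κ' : ℝ) (hμ : 0 < μ) (hκ : 0 < κ) (hκκ' : κ ≤ κ')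
    (f : Matrix (Fin n) (Fin p) ℝ → ℝ)
    (Gf : Matrix (Fin n) (Fin p) ℝ → Matrix (Fin n) (Fin p) ℝ)
    (hf : ∀ X : Matrix (Fin n) (Fin p) ℝ,
      ∃ D : Matrix (Fin n) (Fin p) ℝ →L[ℝ] ℝ,
        HasFDerivAt f D X ∧ ∀ H, D H = ((Gf X)ᵀ * H).trace)
    (hGf : Continuous Gf)
    (g : Matrix (Fin n) (Fin p) ℝ → ℝ)
    (hg : Continuous g) (hgc : ConvexOn ℝ Set.univ g)
    (z η : ℕ → Matrix (Fin n) (Fin p) ℝ)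
    (W : ℕ → (Matrix (Fin n) (Fin p) ℝ →ₗ[ℝ] Matrix (Fin n) (Fin p) ℝ))
    (hstiefel : ∀ i, (z i)ᵀ * z i = 1)
    (htangent : ∀ i, (z i)ᵀ * η i + (η i)ᵀ * z i = 0)
    (hWsa : ∀ i, ∀ a b : Matrix (Fin n) (Fin p) ℝ,
      ((W i a)ᵀ * b).trace = (aᵀ * W i b).trace)
    (hWbnd : ∀ i, ∀ ξ : Matrix (Fin n) (Fin p) ℝ,
      κ * (ξᵀ * ξ).trace ≤ (ξᵀ * W i ξ).trace ∧
        (ξᵀ * W i ξ).trace ≤ κ' * (ξᵀ * ξ).trace)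
    (hopt : ∀ i, ∃ v : Matrix (Fin n) (Fin p) ℝ,
      (∀ y, g y ≥ g (z i + η i) + (vᵀ * (y - (z i + η i))).trace) ∧
        stiefelProj (z i) (Gf (z i) + (1 / μ) • W i (η i) + v) = 0)
    (zstar : Matrix (Fin n) (Fin p) ℝ)
    (hz : Tendsto z atTop (𝓝 zstar)) (hη : Tendsto η atTop (𝓝 0)) :
    ∃ v : Matrix (Fin n) (Fin p) ℝ,
      (∀ y, g y ≥ g zstar + (vᵀ * (y - zstar)).trace) ∧
        stiefelProj zstar (Gf zstar + v) = 0 := by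
  classical
  choose v hvsub hvproj using hopt
  have hx : Tendsto (fun i => z i + η i) atTop (𝓝 zstar) := by
    simpa using hz.add hη
  obtain ⟨C, hC⟩ := (isCompact_closedBall zstar 2).exists_bound_of_continuousOn
    (hg.continuousOn (s := Metric.closedBall zstar 2))
  have hzball : zstar ∈ Metric.closedBall zstar 2 := Metric.mem_closedBall_self (by norm_num)
  have hC0 : 0 ≤ C := le_trans (norm_nonneg _) (hC zstar hzball)
  have hev : ∀ᶠ i in atTop, dist (z i + η i) zstar ≤ 1 := by
    have := Metric.tendsto_nhds.mp hx 1 one_pos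
    filter_upwards [this] with i hi using le_of_lt hi
  obtain ⟨i₀, hi₀⟩ := hev.exists_forall_of_atTop
  have hvbnd : ∀ i, i₀ ≤ i → ‖v i‖ ≤ 2 * C := by
    intro i hi
    have h1 := hi₀ i hi
    by_cases hv0 : v i = 0
    · rw [hv0, norm_zero]; positivity
    · have hvn : ‖v i‖ ≠ 0 := norm_ne_zero_iff.mpr hv0
      set y := (z i + η i) + ‖v i‖⁻¹ • v i with hy
      have hsub := hvsub i y
      have htr : ((v i)ᵀ * (y - (z i + η i))).trace = ‖v i‖ := by
        rw [hy, add_sub_cancel_left, Matrix.mul_smul, Matrix.trace_smul, aux_norm_sq,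
          smul_eq_mul, pow_two]
        field_simp
      have hxball : z i + η i ∈ Metric.closedBall zstar 2 := by
        simp only [Metric.mem_closedBall]; linarith
      have hyball : y ∈ Metric.closedBall zstar 2 := by
        have hnorm1 : ‖‖v i‖⁻¹ • v i‖ = 1 := by
          rw [norm_smul, norm_inv, norm_norm]; field_simp
        simp only [Metric.mem_closedBall]
        have heq : y - zstar = (‖v i‖⁻¹ • v i) + ((z i + η i) - zstar) := by
          rw [hy]; abel
        rw [dist_eq_norm, heq]
        calc ‖(‖v i‖⁻¹ • v i) + ((z i + η i) - zstar)‖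
            ≤ ‖‖v i‖⁻¹ • v i‖ + ‖(z i + η i) - zstar‖ := norm_add_le _ _
          _ ≤ 1 + 1 := by
              rw [hnorm1]
              have := h1; rw [dist_eq_norm] at this; linarith
          _ = 2 := by norm_num
      have hgx := hC _ hxball
      have hgy := hC _ hyball
      rw [Real.norm_eq_abs, abs_le] at hgx hgy
      rw [htr] at hsub
      linarith
  have hmem : ∀ k, v (k + i₀) ∈ Metric.closedBall (0 : Matrix (Fin n) (Fin p) ℝ) (2 * C) := by
    intro k
    simpa [Metric.mem_closedBall, dist_zero_right] using hvbnd (k + i₀) (Nat.le_add_left _ _)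
  obtain ⟨vlim, hvlimmem, φ, hφ, hvtend⟩ :=
    (isCompact_closedBall (0 : Matrix (Fin n) (Fin p) ℝ) (2 * C)).tendsto_subseq hmem
  set ψ : ℕ → ℕ := fun k => φ k + i₀ with hψdef
  have hψtop : Tendsto ψ atTop atTop :=
    tendsto_atTop_mono (fun k => le_trans (hφ.id_le k) (Nat.le_add_right _ _)) tendsto_id
  have hzψ : Tendsto (fun k => z (ψ k)) atTop (𝓝 zstar) := hz.comp hψtop
  have hηψ : Tendsto (fun k => η (ψ k)) atTop (𝓝 0) := hη.comp hψtop
  have hxψ : Tendsto (fun k => z (ψ k) + η (ψ k)) atTop (𝓝 zstar) := hx.comp hψtop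
  have hvψ : Tendsto (fun k => v (ψ k)) atTop (𝓝 vlim) := hvtend
  refine ⟨vlim, ?_, ?_⟩
  · intro y
    have hineq : ∀ k, g (z (ψ k) + η (ψ k)) +
        ((v (ψ k))ᵀ * (y - (z (ψ k) + η (ψ k)))).trace ≤ g y :=
      fun k => hvsub (ψ k) y
    have hTk : Tendsto (fun k => ((v (ψ k))ᵀ * (y - (z (ψ k) + η (ψ k)))).trace) atTop
        (𝓝 ((vlimᵀ * (y - zstar)).trace)) := by
      rw [tendsto_iff_norm_sub_tendsto_zero]
      apply squeeze_zero_norm (a := fun k =>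
        ‖v (ψ k) - vlim‖ * ‖y - (z (ψ k) + η (ψ k))‖ + ‖vlim‖ * ‖zstar - (z (ψ k) + η (ψ k))‖)
      · intro k
        have hsplit : ((v (ψ k))ᵀ * (y - (z (ψ k) + η (ψ k)))).trace
            - (vlimᵀ * (y - zstar)).trace
            = ((v (ψ k) - vlim)ᵀ * (y - (z (ψ k) + η (ψ k)))).trace
              + (vlimᵀ * (zstar - (z (ψ k) + η (ψ k)))).trace := by
          simp only [Matrix.transpose_sub, Matrix.sub_mul, Matrix.mul_sub, Matrix.trace_sub]
          ring
        rw [norm_norm, hsplit]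
        calc |((v (ψ k) - vlim)ᵀ * (y - (z (ψ k) + η (ψ k)))).trace
              + (vlimᵀ * (zstar - (z (ψ k) + η (ψ k)))).trace|
            ≤ |((v (ψ k) - vlim)ᵀ * (y - (z (ψ k) + η (ψ k)))).trace|
              + |(vlimᵀ * (zstar - (z (ψ k) + η (ψ k)))).trace| := abs_add_le _ _
          _ ≤ ‖v (ψ k) - vlim‖ * ‖y - (z (ψ k) + η (ψ k))‖
              + ‖vlim‖ * ‖zstar - (z (ψ k) + η (ψ k))‖ := by
              gcongr <;> exact aux_tr_abs _ _
      · have h1 : Tendsto (fun k => ‖v (ψ k) - vlim‖) atTop (𝓝 0) :=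
          tendsto_iff_norm_sub_tendsto_zero.mp hvψ
        have h2 : Tendsto (fun k => ‖y - (z (ψ k) + η (ψ k))‖) atTop (𝓝 ‖y - zstar‖) :=
          (tendsto_const_nhds.sub hxψ).norm
        have h3 : Tendsto (fun k => ‖zstar - (z (ψ k) + η (ψ k))‖) atTop (𝓝 0) := by
          have := (tendsto_const_nhds.sub hxψ).norm (f := fun k => zstar - (z (ψ k) + η (ψ k)))
          simpa using this
        have := (h1.mul h2).add (h3.const_mul ‖vlim‖)
        simpa using this
    have htend : Tendsto (fun k => g (z (ψ k) + η (ψ k)) +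
        ((v (ψ k))ᵀ * (y - (z (ψ k) + η (ψ k)))).trace) atTop
        (𝓝 (g zstar + (vlimᵀ * (y - zstar)).trace)) :=
      ((hg.tendsto zstar).comp hxψ).add hTk
    exact le_of_tendsto htend (Filter.Eventually.of_forall hineq)
  · have hκ'0 : (0:ℝ) ≤ κ' := le_trans hκ.le hκκ'
    have hWb : ∀ k, ‖W (ψ k) (η (ψ k))‖ ≤ κ' * ‖η (ψ k)‖ := by
      intro k
      refine aux_W_bound hκ'0 (W (ψ k)) (hWsa (ψ k)) (fun ξ => ?_) (fun ξ => (hWbnd _ ξ).2) _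
      refine le_trans ?_ (hWbnd (ψ k) ξ).1
      rw [aux_norm_sq]
      positivity
    have hmid : Tendsto (fun k => (1 / μ : ℝ) • W (ψ k) (η (ψ k))) atTop
        (𝓝 (0 : Matrix (Fin n) (Fin p) ℝ)) := by
      apply squeeze_zero_norm (a := fun k => (1 / μ) * (κ' * ‖η (ψ k)‖))
      · intro k
        rw [norm_smul, Real.norm_eq_abs, abs_of_pos (by positivity : (0:ℝ) < 1 / μ)]
        exact mul_le_mul_of_nonneg_left (hWb k) (by positivity)
      · have h1 : Tendsto (fun k => ‖η (ψ k)‖) atTop (𝓝 0) := by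
          simpa using hηψ.norm
        have := h1.const_mul ((1 / μ) * κ')
        simpa [mul_assoc] using this
    have hA : Tendsto (fun k => Gf (z (ψ k)) + (1 / μ : ℝ) • W (ψ k) (η (ψ k)) + v (ψ k)) atTop
        (𝓝 (Gf zstar + vlim)) := by
      have := (((hGf.tendsto zstar).comp hzψ).add hmid).add hvψ
      simpa using this
    have hT1 : Tendsto (fun k => (z (ψ k))ᵀ) atTop (𝓝 zstarᵀ) := aux_tendsto_transpose hzψ
    have hT2 := aux_tendsto_mul hT1 hA
    have hT3 := aux_tendsto_transpose hT2
    have hsym : Tendsto (fun k => symPart ((z (ψ k))ᵀ *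
        (Gf (z (ψ k)) + (1 / μ : ℝ) • W (ψ k) (η (ψ k)) + v (ψ k)))) atTop
        (𝓝 (symPart (zstarᵀ * (Gf zstar + vlim)))) := by
      unfold symPart
      exact (hT2.add hT3).const_smul _
    have hT4 := aux_tendsto_mul hzψ hsym
    have hfinal : Tendsto (fun k => stiefelProj (z (ψ k))
        (Gf (z (ψ k)) + (1 / μ : ℝ) • W (ψ k) (η (ψ k)) + v (ψ k))) atTop
        (𝓝 (stiefelProj zstar (Gf zstar + vlim))) := by
      unfold stiefelProj
      exact hA.sub hT4
    have heq0 : (fun k => stiefelProj (z (ψ k))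
        (Gf (z (ψ k)) + (1 / μ : ℝ) • W (ψ k) (η (ψ k)) + v (ψ k))) =
        fun _ => (0 : Matrix (Fin n) (Fin p) ℝ) :=
      funext fun k => hvproj (ψ k)
    rw [heq0] at hfinal
    exact tendsto_nhds_unique hfinal tendsto_const_nhds
end

section
/- Let n, p be positive integers with p ≤ n, and equip ℝ^{n×p} with the Frobenius inner product ⟪U, V⟫ := trace(Uᵀ V). Let f : ℝ^{n×p} → ℝ be differentiable with gradient map Gf (i.e., the Fréchet derivative of f at X is H ↦ ⟪Gf(X), H⟫), let g : ℝ^{n×p} → ℝ be continuous and convex, let μ > 0, and let W be a self-adjoint linear map on ℝ^{n×p} with ⟪ξ, Wξ⟫ > 0 for all ξ ≠ 0. Let x ∈ ℝ^{n×p} with xᵀx = I_p and T_x := {η : xᵀη + ηᵀx = 0}, sym(M) := (M + Mᵀ)/2, P_x(ξ) := ξ − x·sym(xᵀξ). If η = 0 is a minimizer over T_x of the function η ↦ ⟪P_x(Gf(x)), η⟫ + (1/(2μ))⟪η, Wη⟫ + g(x + η), then there exists v ∈ ∂g(x) such that P_x(Gf(x) + v) = 0, i.e., x is a stationary point of F =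 f + g on the Stiefel manifold. -/
open Matrix

attribute [local instance] Matrix.frobeniusNormedAddCommGroup Matrix.frobeniusNormedSpace

namespace StiefelAux

variable {n p : ℕ}

lemma trace_self_eq_sum (a : Matrix (Fin n) (Fin p) ℝ) :
    (aᵀ * a).trace = ∑ j, ∑ i, a i j * a i j := by
  simp [Matrix.trace, Matrix.diag, Matrix.mul_apply, Matrix.transpose_apply]

lemma eq_zero_of_trace_self (a : Matrix (Fin n) (Fin p) ℝ)
    (h : (aᵀ * a).trace = 0) : a = 0 := by
  rw [trace_self_eq_sum] at h
  have h' : ∀ j ∈ Finset.univ, ∀ i ∈ (Finset.univ : Finset (Fin n)), a i j * a i j = 0 := by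
    intro j _
    have hj : ∀ j ∈ (Finset.univ : Finset (Fin p)), (0:ℝ) ≤ ∑ i, a i j * a i j :=
      fun j _ => Finset.sum_nonneg fun i _ => mul_self_nonneg _
    have := (Finset.sum_eq_zero_iff_of_nonneg hj).mp h j (Finset.mem_univ j)
    intro i _
    exact (Finset.sum_eq_zero_iff_of_nonneg (fun i _ => mul_self_nonneg _)).mp this i
      (Finset.mem_univ i)
  ext i j
  have := h' j (Finset.mem_univ j) i (Finset.mem_univ i)
  simpa [mul_self_eq_zero] using this

lemma trace_sym_skew {S K : Matrix (Fin p) (Fin p) ℝ} (hS : Sᵀ = S) (hK : Kᵀ = -K) :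
    (S * K).trace = 0 := by
  have h1 : (S * K).trace = ((S * K)ᵀ).trace := (Matrix.trace_transpose _).symm
  rw [Matrix.transpose_mul, hS, hK, Matrix.neg_mul, Matrix.trace_neg,
    Matrix.trace_mul_comm] at h1
  rw [Matrix.trace_mul_comm]
  linarith

lemma symPart_transpose (M : Matrix (Fin p) (Fin p) ℝ) : (symPart M)ᵀ = symPart M := by
  simp [symPart, Matrix.transpose_smul, Matrix.transpose_add, add_comm]

lemma symPart_of_skew {K : Matrix (Fin p) (Fin p) ℝ} (hK : Kᵀ = -K) : symPart K = 0 := by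
  simp [symPart, hK]

lemma symPart_add (M N : Matrix (Fin p) (Fin p) ℝ) :
    symPart (M + N) = symPart M + symPart N := by
  simp only [symPart, Matrix.transpose_add]
  module

lemma symPart_sub (M N : Matrix (Fin p) (Fin p) ℝ) :
    symPart (M - N) = symPart M - symPart N := by
  simp only [symPart, Matrix.transpose_sub]
  module

lemma proj_add (X a b : Matrix (Fin n) (Fin p) ℝ) :
    stiefelProj X (a + b) = stiefelProj X a + stiefelProj X b := by
  rw [stiefelProj, stiefelProj, stiefelProj, Matrix.mul_add, symPart_add, Matrix.mul_add]
  abel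

lemma proj_sub (X a b : Matrix (Fin n) (Fin p) ℝ) :
    stiefelProj X (a - b) = stiefelProj X a - stiefelProj X b := by
  rw [stiefelProj, stiefelProj, stiefelProj, Matrix.mul_sub, symPart_sub, Matrix.mul_sub]
  abel

variable {x : Matrix (Fin n) (Fin p) ℝ}

lemma xT_proj (hx : xᵀ * x = 1) (ξ : Matrix (Fin n) (Fin p) ℝ) :
    xᵀ * stiefelProj x ξ = (1/2 : ℝ) • (xᵀ * ξ - ξᵀ * x) := by
  rw [stiefelProj, Matrix.mul_sub, ← Matrix.mul_assoc, hx, Matrix.one_mul, symPart]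
  rw [Matrix.transpose_mul, Matrix.transpose_transpose]
  rw [smul_sub, smul_add]
  ext i j
  simp [Matrix.sub_apply, Matrix.smul_apply, Matrix.add_apply]
  ring

lemma xT_proj_skew (hx : xᵀ * x = 1) (ξ : Matrix (Fin n) (Fin p) ℝ) :
    (xᵀ * stiefelProj x ξ)ᵀ = -(xᵀ * stiefelProj x ξ) := by
  rw [xT_proj hx]
  simp only [Matrix.transpose_smul, Matrix.transpose_sub, Matrix.transpose_mul,
    Matrix.transpose_transpose]
  rw [← smul_neg, neg_sub]

lemma proj_mem_tangent (hx : xᵀ * x = 1) (ξ : Matrix (Fin n) (Fin p) ℝ) :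
    xᵀ * stiefelProj x ξ + (stiefelProj x ξ)ᵀ * x = 0 := by
  have h := xT_proj_skew hx ξ
  have h2 : (stiefelProj x ξ)ᵀ * x = (xᵀ * stiefelProj x ξ)ᵀ := by
    rw [Matrix.transpose_mul, Matrix.transpose_transpose]
  rw [h2, h, add_neg_cancel]

lemma proj_idem (hx : xᵀ * x = 1) (ξ : Matrix (Fin n) (Fin p) ℝ) :
    stiefelProj x (stiefelProj x ξ) = stiefelProj x ξ := by
  have h := symPart_of_skew (xT_proj_skew hx ξ)
  rw [stiefelProj, h, Matrix.mul_zero, sub_zero]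

end StiefelAux

namespace StiefelAux

lemma nonneg_of_forall_Ioc {A c : ℝ} (h : ∀ t : ℝ, t ∈ Set.Ioc (0:ℝ) 1 → 0 ≤ A + t * c) :
    0 ≤ A := by
  by_contra hA
  push_neg at hA
  rcases le_or_gt c 0 with hc | hc
  · have := h 1 ⟨one_pos, le_refl 1⟩
    nlinarith
  · have hpos : 0 < -A / (2 * c) := div_pos (by linarith) (by linarith)
    have ht : min 1 (-A / (2 * c)) ∈ Set.Ioc (0:ℝ) 1 :=
      ⟨lt_min one_pos hpos, min_le_left _ _⟩
    have h1 := h _ ht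
    have h2 : min 1 (-A / (2 * c)) * c ≤ -A / 2 := by
      have h3 : min 1 (-A / (2 * c)) ≤ -A / (2 * c) := min_le_right _ _
      have h4 : min 1 (-A / (2 * c)) * c ≤ (-A / (2 * c)) * c :=
        mul_le_mul_of_nonneg_right h3 hc.le
      have h5 : (-A / (2 * c)) * c = -A / 2 := by field_simp
      linarith
    linarith

end StiefelAux

set_option maxHeartbeats 1000000 in
/-- Lemma 2(2) of the paper, instantiated on the Stiefel manifold.
Let `f` be differentiable with gradient `Gf` (w.r.t. the Frobenius inner
product), `g` continuous and convex, `μ > 0`, and `W` self-adjoint positive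
definite. If `η = 0` minimizes
`η ↦ ⟪P_x(Gf x), η⟫ + (1/(2μ)) ⟪η, W η⟫ + g(x + η)` over the tangent space
`T_x = {η : xᵀη + ηᵀx = 0}` at a point `x` with `xᵀx = 1`, then there exists
`v ∈ ∂g(x)` with `P_x(Gf x + v) = 0`. -/
theorem zero_search_direction_implies_stationary
    {n p : ℕ} (hp : 0 < p) (hpn : p ≤ n) (μ : ℝ) (hμ : 0 < μ)
    (f : Matrix (Fin n) (Fin p) ℝ → ℝ)
    (Gf : Matrix (Fin n) (Fin p) ℝ → Matrix (Fin n) (Fin p) ℝ)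
    (hf : ∀ X : Matrix (Fin n) (Fin p) ℝ,
      ∃ D : Matrix (Fin n) (Fin p) ℝ →L[ℝ] ℝ,
        HasFDerivAt f D X ∧ ∀ H, D H = ((Gf X)ᵀ * H).trace)
    (g : Matrix (Fin n) (Fin p) ℝ → ℝ)
    (hg : Continuous g) (hgc : ConvexOn ℝ Set.univ g)
    (W : Matrix (Fin n) (Fin p) ℝ →ₗ[ℝ] Matrix (Fin n) (Fin p) ℝ)
    (hWsa : ∀ a b : Matrix (Fin n) (Fin p) ℝ,
      ((W a)ᵀ * b).trace = (aᵀ * W b).trace)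
    (hWpd : ∀ ξ : Matrix (Fin n) (Fin p) ℝ, ξ ≠ 0 → 0 < (ξᵀ * W ξ).trace)
    (x : Matrix (Fin n) (Fin p) ℝ) (hx : xᵀ * x = 1)
    (hmin : ∀ η : Matrix (Fin n) (Fin p) ℝ, xᵀ * η + ηᵀ * x = 0 →
      ((stiefelProj x (Gf x))ᵀ * (0 : Matrix (Fin n) (Fin p) ℝ)).trace +
          (1 / (2 * μ)) *
            (((0 : Matrix (Fin n) (Fin p) ℝ))ᵀ * W 0).trace +
          g (x + 0) ≤
        ((stiefelProj x (Gf x))ᵀ * η).trace +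
          (1 / (2 * μ)) * (ηᵀ * W η).trace + g (x + η)) :
    ∃ v : Matrix (Fin n) (Fin p) ℝ,
      (∀ y, g y ≥ g x + (vᵀ * (y - x)).trace) ∧
        stiefelProj x (Gf x + v) = 0 := by
  classical
  set G : Matrix (Fin n) (Fin p) ℝ := stiefelProj x (Gf x) with hGdef
  -- the linear functional ξ ↦ ⟪G, ξ⟫
  set tL : Matrix (Fin n) (Fin p) ℝ →ₗ[ℝ] ℝ :=
    { toFun := fun ξ => (Gᵀ * ξ).trace
      map_add' := by intro a b; simp [Matrix.mul_add]
      map_smul' := by intro r a; simp [Matrix.mul_smul] } with htLdef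
  have htL : ∀ ξ, tL ξ = (Gᵀ * ξ).trace := fun ξ => rfl
  set φ : Matrix (Fin n) (Fin p) ℝ → ℝ := fun ξ => g (x + ξ) - g x + tL ξ with hφdef
  have hφ0 : φ 0 = 0 := by simp [hφdef]
  -- Step 1: φ is nonnegative on the tangent space.
  have hφT : ∀ η, xᵀ * η + ηᵀ * x = 0 → 0 ≤ φ η := by
    intro η hη
    have key : ∀ t : ℝ, t ∈ Set.Ioc (0:ℝ) 1 →
        0 ≤ (tL η + (g (x + η) - g x)) + t * ((1 / (2 * μ)) * (ηᵀ * W η).trace) := by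
      intro t ht
      have htT : xᵀ * (t • η) + (t • η)ᵀ * x = 0 := by
        rw [Matrix.mul_smul, Matrix.transpose_smul, Matrix.smul_mul, ← smul_add, hη,
          smul_zero]
      have h1 := hmin (t • η) htT
      simp only [Matrix.mul_zero, Matrix.trace_zero, mul_zero, add_zero, zero_add,
        map_zero, Matrix.transpose_zero, Matrix.zero_mul] at h1
      have e1 : (Gᵀ * (t • η)).trace = t * (Gᵀ * η).trace := by
        rw [Matrix.mul_smul, Matrix.trace_smul, smul_eq_mul]
      have e2 : ((t • η)ᵀ * W (t • η)).trace = t * (t * (ηᵀ * W η).trace) := by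
        rw [_root_.map_smul, Matrix.transpose_smul, Matrix.smul_mul, Matrix.mul_smul,
          Matrix.trace_smul, Matrix.trace_smul, smul_eq_mul, smul_eq_mul]
      have hcomb : (1 - t) • x + t • (x + η) = x + t • η := by
        rw [smul_add, sub_smul, one_smul]
        abel
      have hc := hgc.2 (Set.mem_univ x) (Set.mem_univ (x + η))
        (by linarith [ht.2] : (0:ℝ) ≤ 1 - t) ht.1.le (by ring)
      rw [hcomb, smul_eq_mul, smul_eq_mul] at hc
      rw [e1, e2] at h1
      by_contra hcon
      push_neg at hcon
      have hneg : t * ((tL η + (g (x + η) - g x)) +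
          t * ((1 / (2 * μ)) * (ηᵀ * W η).trace)) < 0 :=
        mul_neg_of_pos_of_neg ht.1 hcon
      rw [htL] at hneg
      nlinarith [h1, hc, hneg]
    have := StiefelAux.nonneg_of_forall_Ioc key
    simp only [hφdef]
    linarith
  -- φ is convex
  have hφconv : ∀ ξ ζ : Matrix (Fin n) (Fin p) ℝ, ∀ a b : ℝ, 0 ≤ a → 0 ≤ b → a + b = 1 →
      φ (a • ξ + b • ζ) ≤ a * φ ξ + b * φ ζ := by
    intro ξ ζ a b ha hb hab
    have hcomb : a • (x + ξ) + b • (x + ζ) = x + (a • ξ + b • ζ) := by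
      have hxx : a • x + b • x = x := by rw [← add_smul, hab, one_smul]
      rw [smul_add, smul_add]
      conv_rhs => rw [← hxx]
      abel
    have hg2 := hgc.2 (Set.mem_univ (x + ξ)) (Set.mem_univ (x + ζ)) ha hb hab
    rw [hcomb, smul_eq_mul, smul_eq_mul] at hg2
    have hlin : tL (a • ξ + b • ζ) = a * tL ξ + b * tL ζ := by
      rw [map_add, _root_.map_smul, _root_.map_smul, smul_eq_mul, smul_eq_mul]
    have hgx : a * g x + b * g x = g x := by rw [← add_mul, hab, one_mul]
    simp only [hφdef]
    nlinarith [hg2, hlin, hgx]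
  -- φ is continuous
  have htLcont : Continuous fun ξ => tL ξ := tL.continuous_of_finiteDimensional
  have hφcont : Continuous φ := by
    rw [hφdef]
    exact ((hg.comp (continuous_const.add continuous_id)).sub continuous_const).add htLcont
  -- Separation of the strict epigraph of φ from T × {0}
  set A : Set (Matrix (Fin n) (Fin p) ℝ × ℝ) := {q | φ q.1 < q.2} with hAdef
  set B : Set (Matrix (Fin n) (Fin p) ℝ × ℝ) :=
    {q | (xᵀ * q.1 + q.1ᵀ * x = 0) ∧ q.2 = 0} with hBdef
  have hAopen : IsOpen A := by
    have : A = (fun q : Matrix (Fin n) (Fin p) ℝ × ℝ => q.2 - φ q.1) ⁻¹' Set.Ioi 0 := by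
      ext q
      simp [hAdef, sub_pos]
    rw [this]
    exact (continuous_snd.sub (hφcont.comp continuous_fst)).isOpen_preimage _ isOpen_Ioi
  have hAconv : Convex ℝ A := by
    intro q hq r hr a b ha hb hab
    simp only [hAdef, Set.mem_setOf_eq] at hq hr ⊢
    have h1 := hφconv q.1 r.1 a b ha hb hab
    have h2 : (a • q + b • r).1 = a • q.1 + b • r.1 := rfl
    have h3 : (a • q + b • r).2 = a * q.2 + b * r.2 := rfl
    rw [h2, h3]
    rcases eq_or_lt_of_le ha with rfl | ha'
    · have hb1 : b = 1 := by linarith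
      subst hb1
      simp only [zero_smul, zero_add, one_smul, zero_mul, one_mul] at h1 ⊢
      exact lt_of_le_of_lt (by linarith) hr
    · have h4 : a * φ q.1 < a * q.2 := mul_lt_mul_of_pos_left hq ha'
      have h5 : b * φ r.1 ≤ b * r.2 := mul_le_mul_of_nonneg_left hr.le hb
      exact lt_of_le_of_lt h1 (by linarith)
  have hBconv : Convex ℝ B := by
    intro q hq r hr a b ha hb hab
    simp only [hBdef, Set.mem_setOf_eq] at hq hr ⊢
    constructor
    · have h2 : (a • q + b • r).1 = a • q.1 + b • r.1 := rfl
      rw [h2]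
      have : xᵀ * (a • q.1 + b • r.1) + (a • q.1 + b • r.1)ᵀ * x =
          a • (xᵀ * q.1 + q.1ᵀ * x) + b • (xᵀ * r.1 + r.1ᵀ * x) := by
        rw [Matrix.mul_add, Matrix.transpose_add, Matrix.add_mul, Matrix.mul_smul,
          Matrix.mul_smul, Matrix.transpose_smul, Matrix.transpose_smul,
          Matrix.smul_mul, Matrix.smul_mul, smul_add, smul_add]
        abel
      rw [this, hq.1, hr.1, smul_zero, smul_zero, add_zero]
    · have h3 : (a • q + b • r).2 = a * q.2 + b * r.2 := rfl
      rw [h3, hq.2, hr.2, mul_zero, mul_zero, add_zero]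
  have hdisj : Disjoint A B := by
    rw [Set.disjoint_left]
    intro q hqA hqB
    simp only [hAdef, Set.mem_setOf_eq] at hqA
    simp only [hBdef, Set.mem_setOf_eq] at hqB
    have := hφT q.1 hqB.1
    rw [hqB.2] at hqA
    linarith
  obtain ⟨F, u, hFA, hFB⟩ := geometric_hahn_banach_open hAconv hAopen hBconv hdisj
  set c : ℝ := F ((0 : Matrix (Fin n) (Fin p) ℝ), (1:ℝ)) with hcdef
  have hF00 : F ((0 : Matrix (Fin n) (Fin p) ℝ), (0:ℝ)) = 0 := by
    have : ((0 : Matrix (Fin n) (Fin p) ℝ), (0:ℝ)) =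
        (0 : Matrix (Fin n) (Fin p) ℝ × ℝ) := rfl
    rw [this, map_zero]
  have hdecomp : ∀ ξ t, F (ξ, t) = F (ξ, 0) + t * c := by
    intro ξ t
    have h1 : (ξ, t) = (ξ, (0:ℝ)) + t • ((0 : Matrix (Fin n) (Fin p) ℝ), (1:ℝ)) := by
      rw [Prod.ext_iff]
      constructor
      · simp
      · simp
    rw [h1, map_add, _root_.map_smul, smul_eq_mul, hcdef]
  have h0B : ((0 : Matrix (Fin n) (Fin p) ℝ), (0:ℝ)) ∈ B := by
    simp [hBdef]
  have hu_le : u ≤ 0 := by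
    have := hFB _ h0B
    rw [hF00] at this
    exact this
  have hAmem : ∀ ε : ℝ, 0 < ε → ((0 : Matrix (Fin n) (Fin p) ℝ), ε) ∈ A := by
    intro ε hε
    simp only [hAdef, Set.mem_setOf_eq]
    rw [hφ0]
    exact hε
  have hF01 : F ((0 : Matrix (Fin n) (Fin p) ℝ), (1:ℝ)) = c := rfl
  have hu_ge : 0 ≤ u := by
    by_contra hcon
    push_neg at hcon
    have hc0 : c < u := by
      have := hFA _ (hAmem 1 one_pos)
      rw [hF01] at this
      exact this
    have hcneg : c < 0 := lt_trans hc0 hcon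
    have hεpos : 0 < u / (2 * c) := div_pos_of_neg_of_neg hcon (by linarith)
    have h2 := hFA _ (hAmem _ hεpos)
    rw [hdecomp, hF00, zero_add] at h2
    have hcne : c ≠ 0 := ne_of_lt hcneg
    have h3 : u / (2 * c) * c = u / 2 := by
      field_simp
    rw [h3] at h2
    linarith
  have hu : u = 0 := le_antisymm hu_le hu_ge
  have hc : c < 0 := by
    have := hFA _ (hAmem 1 one_pos)
    rw [hF01, hu] at this
    exact this
  have hLT : ∀ η, xᵀ * η + ηᵀ * x = 0 → F (η, 0) = 0 := by
    intro η hη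
    have hηneg : xᵀ * (-η) + (-η)ᵀ * x = 0 := by
      have : xᵀ * (-η) + (-η)ᵀ * x = -(xᵀ * η + ηᵀ * x) := by
        rw [Matrix.mul_neg, Matrix.transpose_neg, Matrix.neg_mul]
        abel
      rw [this, hη, neg_zero]
    have h1 : u ≤ F (η, 0) := hFB _ (by simp only [hBdef, Set.mem_setOf_eq]; exact ⟨hη, trivial⟩)
    have h2 : u ≤ F (-η, 0) := hFB _ (by simp only [hBdef, Set.mem_setOf_eq]; exact ⟨hηneg, trivial⟩)
    have h3 : F (-η, 0) = -F (η, 0) := by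
      have : ((-η : Matrix (Fin n) (Fin p) ℝ), (0:ℝ)) = -((η, (0:ℝ))) := by
        rw [Prod.ext_iff]; constructor <;> simp
      rw [this, map_neg]
    rw [hu] at h1 h2
    rw [h3] at h2
    linarith
  have hkey : ∀ ξ, F (ξ, 0) + c * φ ξ ≤ 0 := by
    intro ξ
    by_contra hcon
    push_neg at hcon
    have hεpos : 0 < (F (ξ, 0) + c * φ ξ) / (2 * (-c)) := div_pos hcon (by linarith)
    have hmem : (ξ, φ ξ + (F (ξ, 0) + c * φ ξ) / (2 * (-c))) ∈ A := by
      simp only [hAdef, Set.mem_setOf_eq]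
      linarith
    have h2 := hFA _ hmem
    rw [hdecomp, hu, add_mul] at h2
    have hcne : c ≠ 0 := ne_of_lt hc
    have h3 : (F (ξ, 0) + c * φ ξ) / (2 * (-c)) * c = -(F (ξ, 0) + c * φ ξ) / 2 := by
      field_simp
    rw [h3] at h2
    nlinarith [h2, hcon]
  -- construct the normal component w
  set Lm : Matrix (Fin n) (Fin p) ℝ →ₗ[ℝ] ℝ :=
    F.toLinearMap.comp (LinearMap.inl ℝ (Matrix (Fin n) (Fin p) ℝ) ℝ) with hLmdef
  have hLm : ∀ ξ, Lm ξ = F (ξ, 0) := fun ξ => rfl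
  set w : Matrix (Fin n) (Fin p) ℝ :=
    Matrix.of fun i j => Lm (Matrix.single i j 1) / (-c) with hwdef
  have hw : ∀ ξ, (wᵀ * ξ).trace = Lm ξ / (-c) := by
    intro ξ
    have hdecξ : Lm ξ = ∑ i, ∑ j, ξ i j * Lm (Matrix.single i j 1) := by
      conv_lhs => rw [Matrix.matrix_eq_sum_single ξ]
      rw [map_sum]
      refine Finset.sum_congr rfl fun i _ => ?_
      rw [map_sum]
      refine Finset.sum_congr rfl fun j _ => ?_
      have hsb : Matrix.single i j (ξ i j) = ξ i j • Matrix.single i j 1 := by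
        rw [Matrix.smul_single, smul_eq_mul, mul_one]
      rw [hsb, _root_.map_smul, smul_eq_mul]
    have htr : (wᵀ * ξ).trace = ∑ i, ∑ j, w i j * ξ i j := by
      rw [Matrix.trace]
      simp only [Matrix.diag, Matrix.mul_apply, Matrix.transpose_apply]
      exact Finset.sum_comm
    rw [htr, hdecξ, Finset.sum_div]
    refine Finset.sum_congr rfl fun i _ => ?_
    rw [Finset.sum_div]
    refine Finset.sum_congr rfl fun j _ => ?_
    show w i j * ξ i j = ξ i j * Lm (Matrix.single i j 1) / (-c)
    rw [hwdef]
    simp only [Matrix.of_apply]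
    ring
  have hwT : ∀ η : Matrix (Fin n) (Fin p) ℝ, xᵀ * η + ηᵀ * x = 0 → (wᵀ * η).trace = 0 := by
    intro η hη
    rw [hw, hLm, hLT η hη, zero_div]
  have hwφ : ∀ ξ, (wᵀ * ξ).trace ≤ φ ξ := by
    intro ξ
    rw [hw, div_le_iff₀ (by linarith : (0:ℝ) < -c)]
    have h1 := hkey ξ
    rw [← hLm] at h1
    nlinarith
  -- w is in the normal space : P_x w = 0
  have hPw : stiefelProj x w = 0 := by
    have hqT : xᵀ * stiefelProj x w + (stiefelProj x w)ᵀ * x = 0 :=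
      StiefelAux.proj_mem_tangent hx w
    have h1 : (wᵀ * stiefelProj x w).trace = 0 := hwT _ hqT
    have h2 : ((x * symPart (xᵀ * w))ᵀ * stiefelProj x w).trace = 0 := by
      rw [Matrix.transpose_mul, Matrix.mul_assoc, StiefelAux.symPart_transpose]
      exact StiefelAux.trace_sym_skew (StiefelAux.symPart_transpose _)
        (StiefelAux.xT_proj_skew hx w)
    have h3 : ((stiefelProj x w)ᵀ * stiefelProj x w).trace = 0 := by
      have he : (stiefelProj x w)ᵀ * stiefelProj x w =
          wᵀ * stiefelProj x w - (x * symPart (xᵀ * w))ᵀ * stiefelProj x w := by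
        rw [stiefelProj, Matrix.transpose_sub, Matrix.sub_mul]
      rw [he, Matrix.trace_sub, h1, h2, sub_zero]
    exact StiefelAux.eq_zero_of_trace_self _ h3
  -- conclusion
  refine ⟨w - G, ?_, ?_⟩
  · intro y
    have h1 : ((w - G)ᵀ * (y - x)).trace =
        (wᵀ * (y - x)).trace - (Gᵀ * (y - x)).trace := by
      rw [Matrix.transpose_sub, Matrix.sub_mul, Matrix.trace_sub]
    have h2 := hwφ (y - x)
    have h3 : φ (y - x) = g y - g x + (Gᵀ * (y - x)).trace := by
      rw [hφdef]
      simp only [add_sub_cancel]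
      rw [htL]
    rw [h3] at h2
    rw [ge_iff_le, h1]
    linarith
  · rw [StiefelAux.proj_add, StiefelAux.proj_sub, hPw, ← hGdef,
      StiefelAux.proj_idem hx]
    abel
end
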